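/- arXiv:1403.4070 — 5 statements merged into one kernel-verified Lean document; each statement's English description precedes it below -/
import Mathlib

section
/- Let f(X₁,…,Xₙ) = Σ_{j=1}^{N} c_j X₁^{r_{1j}} ⋯ Xₙ^{r_{nj}} with c_j ∈ F_q× and R = (r_{ij}) an n×N integer matrix. Then the number of (x₁,…,xₙ) ∈ (F_q×)ⁿ with f(x₁,…,xₙ)=0 equals (q-1)ⁿ/q + ((q-1)^{n+1-N}/q) · Σ_{(χ₁,…,χ_N) ∈ Ker φ(R̃)} ∏_{j=1}^{N} G(χ_j⁻¹) χ_j(c_j), where R̃ is R with an extra row of all 1's appended, and φ(R̃) maps (χ₁,…,χ_N) to the tuple of products (χ₁^{m_{i1}}⋯χ_N^{m_{iN}})_i over the rows (m_{ij}) of R̃. -/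
open Finset

section Aux

variable {F : Type} [Field F] [Fintype F] [DecidableEq F]

set_option linter.unusedSectionVars false

private lemma addchar_map_sum {ι : Type*} (θ : AddChar F ℂ) (s : Finset ι) (a : ι → F) :
    θ (∑ i ∈ s, a i) = ∏ i ∈ s, θ (a i) := by
  induction s using Finset.cons_induction with
  | empty => simp
  | cons i s hi ih => rw [Finset.sum_cons, Finset.prod_cons, AddChar.map_add_eq_mul, ih]

private lemma sum_F_split (g : F → ℂ) :
    ∑ t : F, g t = g 0 + ∑ t : Fˣ, g ↑t := by
  rw [← Finset.add_sum_erase _ g (Finset.mem_univ 0)]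
  congr 1
  rw [Finset.sum_subtype (p := fun x : F => x ≠ 0) (Finset.univ.erase 0)
      (fun x => by simp [Finset.mem_erase]) g]
  rw [← Equiv.sum_comp unitsEquivNeZero (fun x : {a : F // a ≠ 0} => g ↑x)]
  rfl

private lemma sum_theta (θ : AddChar F ℂ) (hθ : θ ≠ 1) (y : F) :
    ∑ t : F, θ (t * y) = if y = 0 then (Fintype.card F : ℂ) else 0 := by
  have h : ∑ t : F, θ (t * y) = ∑ t : F, (θ.mulShift y) t := by
    simp [AddChar.mulShift_apply, mul_comm]
  rw [h, AddChar.sum_eq_ite]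
  by_cases hy : y = 0
  · simp [hy, AddChar.mulShift_zero, ← AddChar.one_eq_zero, Finset.card_univ]
  · have h2 : θ.mulShift y ≠ 0 := by
      rw [← AddChar.one_eq_zero]
      intro hc
      exact hθ ((AddChar.mulShift_unit_eq_one_iff θ (Ne.isUnit hy)).mp hc)
    simp [hy, h2]

end Aux

section Chars

variable {F : Type} [Field F] [Fintype F] [DecidableEq F] [Fintype (MulChar F ℂ)]

set_option linter.unusedSectionVars false

private lemma neZero_exp : NeZero ((Monoid.exponent Fˣ : ℂ)) :=
  ⟨Nat.cast_ne_zero.mpr Monoid.exponent_ne_zero_of_finite⟩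

private lemma card_mulChar :
    Fintype.card (MulChar F ℂ) = Fintype.card F - 1 := by
  haveI := neZero_exp (F := F)
  have := MulChar.card_eq_card_units_of_hasEnoughRootsOfUnity F ℂ
  rwa [Nat.card_eq_fintype_card, Nat.card_eq_fintype_card, Fintype.card_units] at this

private lemma cast_card_sub_one :
    ((Fintype.card F - 1 : ℕ) : ℂ) = (Fintype.card F : ℂ) - 1 := by
  have h1 : (1:ℕ) ≤ Fintype.card F := Fintype.card_pos
  push_cast [Nat.cast_sub h1]
  ring

private lemma sum_chars (a : Fˣ) :
    ∑ χ : MulChar F ℂ, χ (a : F) = if a = 1 then ((Fintype.card F : ℂ) - 1) else 0 := by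
  haveI := neZero_exp (F := F)
  split_ifs with h
  · subst h
    simp only [Units.val_one, MulChar.map_one]
    rw [Finset.sum_const, Finset.card_univ, card_mulChar, nsmul_eq_mul, mul_one,
      cast_card_sub_one]
  · have ha : (a : F) ≠ 1 := fun hc => h (Units.ext hc)
    obtain ⟨χ₀, hχ₀⟩ := MulChar.exists_apply_ne_one_of_hasEnoughRootsOfUnity F ℂ ha
    refine eq_zero_of_mul_eq_self_left hχ₀ ?_
    rw [Finset.mul_sum]
    simp only [← MulChar.mul_apply]
    exact Fintype.sum_bijective _ (Group.mulLeft_bijective χ₀) _ _ fun χ' ↦ rfl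

private lemma sum_units (ψ : MulChar F ℂ) :
    ∑ u : Fˣ, ψ (u : F) = if ψ = 1 then ((Fintype.card F : ℂ) - 1) else 0 := by
  split_ifs with h
  · subst h
    simp only [MulChar.one_apply_coe]
    rw [Finset.sum_const, Finset.card_univ, Fintype.card_units, nsmul_eq_mul, mul_one,
      cast_card_sub_one]
  · have hs : ∑ a : F, ψ a = ψ 0 + ∑ u : Fˣ, ψ ↑u := sum_F_split ψ
    rw [MulChar.map_zero, zero_add, MulChar.sum_eq_zero_of_ne_one h] at hs
    exact hs.symm

private lemma sum_gauss (θ : AddChar F ℂ) (u : Fˣ) :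
    ∑ χ : MulChar F ℂ, gaussSum χ⁻¹ θ * χ (u : F)
      = ((Fintype.card F : ℂ) - 1) * θ (u : F) := by
  have h1 : ∀ χ : MulChar F ℂ, gaussSum χ⁻¹ θ * χ ↑u
      = ∑ a : F, θ a * (χ⁻¹ a * χ ↑u) := by
    intro χ
    rw [gaussSum, Finset.sum_mul]
    exact Finset.sum_congr rfl fun a _ => by ring
  simp only [h1]
  rw [Finset.sum_comm]
  have key : ∀ a : F, ∑ χ : MulChar F ℂ, θ a * (χ⁻¹ a * χ ↑u)
      = θ a * (if a = ↑u then ((Fintype.card F : ℂ) - 1) else 0) := by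
    intro a
    rw [← Finset.mul_sum]
    congr 1
    by_cases ha : a = 0
    · subst ha
      have h0 : (0 : F) ≠ ↑u := (Units.ne_zero u).symm
      simp only [MulChar.map_zero, zero_mul, Finset.sum_const_zero, if_neg h0]
    · have hv : ((Ne.isUnit ha).unit : F) = a := (Ne.isUnit ha).unit_spec
      set v : Fˣ := (Ne.isUnit ha).unit with hvdef
      have h2 : ∀ χ : MulChar F ℂ, χ⁻¹ a * χ ↑u = χ ↑(v⁻¹ * u) := by
        intro χ
        rw [MulChar.inv_apply' χ a, ← map_mul]
        congr 1
        rw [Units.val_mul, ← hv]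
        push_cast
        rfl
      simp only [h2]
      rw [sum_chars (v⁻¹ * u)]
      have h3 : (v⁻¹ * u = 1) ↔ (a = ↑u) := by
        rw [inv_mul_eq_one, ← hv]
        exact Units.ext_iff
      simp only [h3]
  simp only [key]
  rw [Finset.sum_congr rfl (fun a _ => by rw [mul_ite, mul_zero]),
    Finset.sum_ite_eq' Finset.univ (↑u : F) (fun a => θ a * ((Fintype.card F : ℂ) - 1))]
  simp [mul_comm]

private lemma monoidHom_zpow_apply (f : Fˣ →* ℂˣ) (r : ℤ) (a : Fˣ) :
    (f ^ r) a = f a ^ r := by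
  cases r with
  | ofNat m => simp [zpow_natCast]
  | negSucc m => simp [zpow_negSucc]

private lemma zpow_apply_unit (χ : MulChar F ℂ) (r : ℤ) (a : Fˣ) :
    (χ ^ r) (a : F) = χ ((a ^ r : Fˣ) : F) := by
  rw [← MulChar.coe_equivToUnitHom, ← MulChar.coe_equivToUnitHom]
  have h1 : MulChar.equivToUnitHom (χ ^ r) = MulChar.mulEquivToUnitHom (χ ^ r) := rfl
  rw [h1, map_zpow MulChar.mulEquivToUnitHom χ r]
  have h2 : (MulChar.mulEquivToUnitHom χ ^ r) a = MulChar.mulEquivToUnitHom χ a ^ r :=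
    monoidHom_zpow_apply _ r a
  rw [h2]
  have h3 : MulChar.equivToUnitHom χ (a ^ r) = MulChar.equivToUnitHom χ a ^ r :=
    map_zpow (MulChar.equivToUnitHom χ) a r
  rw [h3]
  rfl

private lemma prod_apply_units {ι : Type*} (s : Finset ι) (χ : ι → MulChar F ℂ) (a : Fˣ) :
    (∏ j ∈ s, χ j) (a : F) = ∏ j ∈ s, χ j (a : F) := by
  induction s using Finset.cons_induction with
  | empty => simp [MulChar.one_apply_coe]
  | cons i s hi ih => rw [Finset.prod_cons, Finset.prod_cons, MulChar.mul_apply, ih]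

private lemma units_val_prod {ι : Type*} (s : Finset ι) (g : ι → Fˣ) :
    ((∏ i ∈ s, g i : Fˣ) : F) = ∏ i ∈ s, ((g i : F)) := by
  induction s using Finset.cons_induction with
  | empty => simp
  | cons i s hi ih => rw [Finset.prod_cons, Finset.prod_cons, Units.val_mul, ih]

end Chars
open Classical in
theorem stmt5 (F : Type) [Field F] [Fintype F] [Fintype (MulChar F ℂ)]
    (q : ℕ) (hq : q = Fintype.card F)
    (θ : AddChar F ℂ) (hθ : θ ≠ 1)
    (n N : ℕ) (c : Fin N → Fˣ) (R : Matrix (Fin n) (Fin N) ℤ) :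
    (Nat.card {x : Fin n → Fˣ |
        ∑ j, (c j : F) * ∏ i, ((x i ^ R i j : Fˣ) : F) = 0} : ℂ)
      = ((q : ℂ) - 1) ^ n / q
        + ((q : ℂ) - 1) ^ ((n : ℤ) + 1 - N) / q *
          ∑ χ : Fin N → MulChar F ℂ,
            if (∀ i, ∏ j, χ j ^ R i j = 1) ∧ (∏ j, χ j = 1) then
              ∏ j, gaussSum (χ j)⁻¹ θ * (χ j) (c j : F)
            else 0 := by
  subst hq
  obtain ⟨f, hf⟩ : ∃ f : (Fin n → Fˣ) → F,
      ∀ x, f x = ∑ j, (c j : F) * ∏ i, ((x i ^ R i j : Fˣ) : F) := ⟨_, fun _ => rfl⟩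
  simp only [← hf]
  set K : ℂ := ∑ χ : Fin N → MulChar F ℂ,
      if (∀ i, ∏ j, χ j ^ R i j = 1) ∧ (∏ j, χ j = 1) then
        ∏ j, gaussSum (χ j)⁻¹ θ * (χ j) (c j : F)
      else 0 with hK
  have hcard2 : 2 ≤ Fintype.card F := Fintype.one_lt_card
  have hQ0 : (Fintype.card F : ℂ) ≠ 0 := Nat.cast_ne_zero.mpr (by omega)
  have hQ1 : (Fintype.card F : ℂ) - 1 ≠ 0 := by
    rw [← cast_card_sub_one]
    exact Nat.cast_ne_zero.mpr (by omega)
  -- counting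
  have hcount : (Nat.card {x : Fin n → Fˣ | f x = 0} : ℂ)
      = ∑ x : Fin n → Fˣ, if f x = 0 then (1:ℂ) else 0 := by
    rw [Nat.card_eq_fintype_card, Fintype.card_subtype, Finset.card_filter]
    push_cast
    exact Finset.sum_congr rfl fun x _ => by by_cases h : f x = 0 <;> simp [h]
  -- step 1 : q * count = (q-1)^n + T
  have h5 : (Fintype.card F : ℂ) * (∑ x : Fin n → Fˣ, if f x = 0 then (1:ℂ) else 0)
      = ((Fintype.card F : ℂ) - 1) ^ n + ∑ x : Fin n → Fˣ, ∑ t : Fˣ, θ (↑t * f x) := by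
    rw [Finset.mul_sum]
    have e1 : ∀ x : Fin n → Fˣ, (Fintype.card F : ℂ) * (if f x = 0 then (1:ℂ) else 0)
        = 1 + ∑ t : Fˣ, θ (↑t * f x) := by
      intro x
      have h2 := sum_F_split (fun t : F => θ (t * f x))
      rw [sum_theta θ hθ (f x)] at h2
      simp only [zero_mul, AddChar.map_zero_eq_one] at h2
      rw [mul_ite, mul_one, mul_zero]
      exact h2
    rw [Finset.sum_congr rfl fun x _ => e1 x, Finset.sum_add_distrib, Finset.sum_const,
      Finset.card_univ, Fintype.card_pi]
    simp only [Fintype.card_units]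
    rw [Finset.prod_const, Finset.card_univ, nsmul_eq_mul, mul_one]
    push_cast [cast_card_sub_one, Fintype.card_fin]
    ring
  -- the key pointwise identity
  have key : ∀ (x : Fin n → Fˣ) (t : Fˣ),
      ((Fintype.card F : ℂ) - 1) ^ N * θ (↑t * f x)
      = ∑ χ : Fin N → MulChar F ℂ,
          (∏ j, gaussSum (χ j)⁻¹ θ * (χ j) (c j : F))
            * ((∏ j, χ j) ((t : F)))
            * (∏ i, ((∏ j, χ j ^ R i j) ((x i : F)))) := by
    intro x t
    have hsplit : (↑t : F) * f x = ∑ j, ((t * c j * ∏ i, x i ^ R i j : Fˣ) : F) := by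
      rw [hf, Finset.mul_sum]
      refine Finset.sum_congr rfl fun j _ => ?_
      rw [Units.val_mul, Units.val_mul, units_val_prod]
      ring
    rw [hsplit, addchar_map_sum θ Finset.univ _]
    have hpc : ((Fintype.card F : ℂ) - 1) ^ N = ∏ _j : Fin N, ((Fintype.card F : ℂ) - 1) := by
      rw [Finset.prod_const, Finset.card_univ, Fintype.card_fin]
    rw [hpc, ← Finset.prod_mul_distrib]
    rw [Finset.prod_congr rfl fun j _ => (sum_gauss θ (t * c j * ∏ i, x i ^ R i j)).symm]
    rw [Fintype.prod_sum]
    refine Finset.sum_congr rfl fun χ _ => ?_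
    have expand : ∀ j, gaussSum (χ j)⁻¹ θ * (χ j) ((t * c j * ∏ i, x i ^ R i j : Fˣ) : F)
        = (gaussSum (χ j)⁻¹ θ * (χ j) (c j : F)) * ((χ j) ((t : F)))
          * ((χ j) ((∏ i, x i ^ R i j : Fˣ) : F)) := by
      intro j
      rw [Units.val_mul, Units.val_mul, map_mul, map_mul]
      ring
    rw [Finset.prod_congr rfl fun j _ => expand j, Finset.prod_mul_distrib,
      Finset.prod_mul_distrib]
    congr 1
    · congr 1
      exact (prod_apply_units Finset.univ χ t).symm
    · have e2 : ∀ j, (χ j) ((∏ i, x i ^ R i j : Fˣ) : F)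
          = ∏ i, ((χ j) ^ R i j) ((x i : F)) := by
        intro j
        rw [units_val_prod, map_prod (χ j)]
        exact Finset.prod_congr rfl fun i _ => (zpow_apply_unit (χ j) (R i j) (x i)).symm
      rw [Finset.prod_congr rfl fun j _ => e2 j, Finset.prod_comm]
      exact Finset.prod_congr rfl fun i _ =>
        (prod_apply_units Finset.univ (fun j => χ j ^ R i j) (x i)).symm
  -- step 2
  have h6 : ((Fintype.card F : ℂ) - 1) ^ N * (∑ x : Fin n → Fˣ, ∑ t : Fˣ, θ (↑t * f x))
      = ((Fintype.card F : ℂ) - 1) ^ (n+1) * K := by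
    rw [Finset.mul_sum]
    simp only [Finset.mul_sum]
    rw [Finset.sum_congr rfl fun x (_ : x ∈ Finset.univ) =>
      Finset.sum_congr rfl fun t (_ : t ∈ Finset.univ) => key x t]
    -- swap sums: x, t, χ → χ outermost
    rw [Finset.sum_congr rfl fun x (_ : x ∈ Finset.univ) => Finset.sum_comm]
    rw [Finset.sum_comm]
    -- now ∑ χ ∑ x ∑ t
    have hfix : ∀ χ : Fin N → MulChar F ℂ,
        (∑ x : Fin n → Fˣ, ∑ t : Fˣ,
          (∏ j, gaussSum (χ j)⁻¹ θ * (χ j) (c j : F))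
            * ((∏ j, χ j) ((t : F)))
            * (∏ i, ((∏ j, χ j ^ R i j) ((x i : F)))))
        = ((Fintype.card F : ℂ) - 1) ^ (n+1) *
            (if (∀ i, ∏ j, χ j ^ R i j = 1) ∧ (∏ j, χ j = 1) then
              ∏ j, gaussSum (χ j)⁻¹ θ * (χ j) (c j : F)
            else 0) := by
      intro χ
      have step1 : ∀ x : Fin n → Fˣ, (∑ t : Fˣ,
          (∏ j, gaussSum (χ j)⁻¹ θ * (χ j) (c j : F))
            * ((∏ j, χ j) ((t : F)))
            * (∏ i, ((∏ j, χ j ^ R i j) ((x i : F)))))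
          = ((∏ j, gaussSum (χ j)⁻¹ θ * (χ j) (c j : F))
              * (if (∏ j, χ j) = 1 then ((Fintype.card F : ℂ) - 1) else 0))
            * (∏ i, ((∏ j, χ j ^ R i j) ((x i : F)))) := by
        intro x
        rw [← Finset.sum_mul, ← Finset.mul_sum, sum_units (∏ j, χ j)]
      rw [Finset.sum_congr rfl fun x (_ : x ∈ Finset.univ) => step1 x, ← Finset.mul_sum]
      have step2 : (∑ x : Fin n → Fˣ, ∏ i, ((∏ j, χ j ^ R i j) ((x i : F))))
          = ∏ i, (if (∏ j, χ j ^ R i j) = 1 then ((Fintype.card F : ℂ) - 1) else 0) := by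
        calc (∑ x : Fin n → Fˣ, ∏ i, ((∏ j, χ j ^ R i j) ((x i : F))))
            = ∏ i, ∑ u : Fˣ, ((∏ j, χ j ^ R i j) ((u : F))) :=
              (Fintype.prod_sum fun i (u : Fˣ) => (∏ j, χ j ^ R i j) ((u : F))).symm
          _ = _ := Finset.prod_congr rfl fun i _ => sum_units _
      rw [step2]
      by_cases hc : (∀ i, ∏ j, χ j ^ R i j = 1) ∧ (∏ j, χ j = 1)
      · rw [if_pos hc, if_pos hc.2,
          Finset.prod_congr rfl fun i (_ : i ∈ Finset.univ) => if_pos (hc.1 i),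
          Finset.prod_const, Finset.card_univ, Fintype.card_fin]
        ring
      · rw [if_neg hc]
        push_neg at hc
        by_cases hall : ∀ i, ∏ j, χ j ^ R i j = 1
        · rw [if_neg (hc hall), mul_zero, zero_mul, mul_zero]
        · push_neg at hall
          obtain ⟨i₀, hi₀⟩ := hall
          have hz : (if (∏ j, χ j ^ R i₀ j) = 1 then ((Fintype.card F : ℂ) - 1) else 0)
              = 0 := if_neg hi₀
          rw [Finset.prod_eq_zero (Finset.mem_univ i₀) hz, mul_zero, mul_zero]
    rw [Finset.sum_congr rfl fun χ (_ : χ ∈ Finset.univ) => hfix χ, ← Finset.mul_sum, hK]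
  -- assemble
  have hNne : ((Fintype.card F : ℂ) - 1) ^ N ≠ 0 := pow_ne_zero _ hQ1
  have hTval : (∑ x : Fin n → Fˣ, ∑ t : Fˣ, θ (↑t * f x))
      = ((Fintype.card F : ℂ) - 1) ^ ((n:ℤ) + 1 - N) * K := by
    apply mul_left_cancel₀ hNne
    rw [h6, ← mul_assoc]
    congr 1
    rw [← zpow_natCast ((Fintype.card F : ℂ) - 1) N, ← zpow_add₀ hQ1,
      ← zpow_natCast ((Fintype.card F : ℂ) - 1) (n+1)]
    congr 1
    push_cast
    ring
  rw [hcount]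
  have hδ : (∑ x : Fin n → Fˣ, if f x = 0 then (1:ℂ) else 0)
      = (((Fintype.card F : ℂ) - 1) ^ n + ∑ x : Fin n → Fˣ, ∑ t : Fˣ, θ (↑t * f x))
          / (Fintype.card F : ℂ) := by
    rw [eq_div_iff hQ0, mul_comm]
    exact h5
  rw [hδ, hTval, add_div, div_mul_eq_mul_div]
end

section
/- Let R̃ be the 5×4 integer matrix with rows (1,1,0,0), (1,0,3,2), (1,3,0,2), (1,0,1,0), (1,1,1,1). Then the kernel of the induced homomorphism φ(R̃) on 4-tuples of multiplicative characters of F_q× equals {(χ, χ⁻¹, χ⁻¹, χ) : χ a multiplicative character of F_q×}. -/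
theorem stmt9 (F : Type) [Field F] [Fintype F] (q : ℕ) (hq : q = Fintype.card F) :
    {χ : Fin 4 → MulChar F ℂ | ∀ i, ∏ j, χ j ^
        (!![1, 1, 0, 0; 1, 0, 3, 2; 1, 3, 0, 2; 1, 0, 1, 0; 1, 1, 1, 1] :
          Matrix (Fin 5) (Fin 4) ℤ) i j = 1}
      = {v | ∃ χ : MulChar F ℂ, v = ![χ, χ⁻¹, χ⁻¹, χ]} := by
  ext χ
  simp only [Set.mem_setOf_eq, Fin.prod_univ_four]
  constructor
  · intro h
    have h0 : χ 0 ^ (1:ℤ) * χ 1 ^ (1:ℤ) * χ 2 ^ (0:ℤ) * χ 3 ^ (0:ℤ) = 1 := h 0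
    have h3 : χ 0 ^ (1:ℤ) * χ 1 ^ (0:ℤ) * χ 2 ^ (1:ℤ) * χ 3 ^ (0:ℤ) = 1 := h 3
    have h4 : χ 0 ^ (1:ℤ) * χ 1 ^ (1:ℤ) * χ 2 ^ (1:ℤ) * χ 3 ^ (1:ℤ) = 1 := h 4
    simp only [zpow_one, zpow_zero, mul_one] at h0 h3 h4
    refine ⟨χ 0, ?_⟩
    have e1 : χ 1 = (χ 0)⁻¹ := eq_inv_of_mul_eq_one_right h0
    have e2 : χ 2 = (χ 0)⁻¹ := eq_inv_of_mul_eq_one_right h3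
    have e3 : χ 3 = χ 0 := by
      rw [e1, e2] at h4
      calc χ 3 = χ 0 * (χ 0 * (χ 0)⁻¹ * (χ 0)⁻¹ * χ 3) := by group
        _ = χ 0 := by rw [h4, mul_one]
    funext i
    fin_cases i
    · rfl
    · exact e1
    · exact e2
    · exact e3
  · rintro ⟨ψ, rfl⟩
    intro i
    fin_cases i
    · show ψ ^ (1:ℤ) * ψ⁻¹ ^ (1:ℤ) * ψ⁻¹ ^ (0:ℤ) * ψ ^ (0:ℤ) = 1; group
    · show ψ ^ (1:ℤ) * ψ⁻¹ ^ (0:ℤ) * ψ⁻¹ ^ (3:ℤ) * ψ ^ (2:ℤ) = 1; group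
    · show ψ ^ (1:ℤ) * ψ⁻¹ ^ (3:ℤ) * ψ⁻¹ ^ (0:ℤ) * ψ ^ (2:ℤ) = 1; group
    · show ψ ^ (1:ℤ) * ψ⁻¹ ^ (0:ℤ) * ψ⁻¹ ^ (1:ℤ) * ψ ^ (0:ℤ) = 1; group
    · show ψ ^ (1:ℤ) * ψ⁻¹ ^ (1:ℤ) * ψ⁻¹ ^ (1:ℤ) * ψ ^ (1:ℤ) = 1; group
end

section
/- Let L = Σ_{t₁,t₂,t₃ ∈ F_q×} θ(t₁ + t₂ + t₃ - t₁²t₂⁻²t₃ - t₁²t₂⁻³t₃² - t₁t₂⁻²t₃²). Then the number of F_q-rational points of the image V of the triple embedding P¹ ↪ P³ satisfies #V(F_q) = -2q² + 6q - 1 + ((q-1)L - 1)/q. -/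
/-!
The twisted cubic is the image of `u ↦ [1 : u : u² : u³]` on the affine line together with
the point `[0 : 0 : 0 : 1]`, so it has `q + 1` rational points. In the exponential sum
substitute `(t₁, t₂, t₃) = (a b, b, c b)`: the phase becomes `-b (a + 1)(c + 1)(a c - 1)`, and
summing over `b ∈ F×` turns each `(a, c)` into `q [(a + 1)(c + 1)(a c - 1) = 0] - 1`. That
cubic vanishes at `3q - 5` points of `(F×)²`, whence `L = q (3q - 5) - (q - 1)² = 2q² - 3q - 1`,
and the identity reduces to `q + 1 = -2q² + 6q - 1 + ((q - 1)(2q² - 3q - 1) - 1) / q`.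
-/

open Finset Projectivization
open scoped LinearAlgebra.Projectivization

lemma Fintype.sum_units_eq_sum_sub_apply_zero {G₀ M : Type*} [GroupWithZero G₀] [Fintype G₀]
    [DecidableEq G₀] [AddCommGroup M] (f : G₀ → M) :
    ∑ u : G₀ˣ, f u = ∑ x, f x - f 0 := by
  rw [Fintype.sum_eq_add_sum_compl 0 f, add_sub_cancel_left,
    ← Fintype.sum_equiv unitsEquivNeZero.symm (fun x ↦ f x) _ fun _ ↦ rfl]
  exact (Finset.sum_subtype _ (by simp) f).symm

lemma AddChar.sum_units_mul_eq {F R : Type*} [Field F] [Fintype F] [DecidableEq F] [CommRing R]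
    [IsDomain R] {ψ : AddChar F R} (hψ : ψ ≠ 1) (h : F) :
    ∑ b : Fˣ, ψ (b * h) = (if h = 0 then (Fintype.card F : R) else 0) - 1 := by
  rw [Fintype.sum_units_eq_sum_sub_apply_zero (fun x ↦ ψ (x * h)),
    AddChar.sum_mulShift h (AddChar.IsPrimitive.of_ne_one hψ), zero_mul, AddChar.map_zero_eq_one,
    Nat.cast_ite, Nat.cast_zero]

section TwistedCubic

variable {F : Type*} [Field F]

def IsOnTwistedCubic (v : Fin 4 → F) : Prop :=
  v 0 * v 2 = v 1 ^ 2 ∧ v 1 * v 3 = v 2 ^ 2 ∧ v 0 * v 3 = v 1 * v 2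

lemma isOnTwistedCubic_smul_iff {a : F} (ha : a ≠ 0) {v : Fin 4 → F} :
    IsOnTwistedCubic (a • v) ↔ IsOnTwistedCubic v := by
  have key (x y z w : F) : a * x * (a * y) = a * z * (a * w) ↔ x * y = z * w := by
    rw [show a * x * (a * y) = a ^ 2 * (x * y) by ring,
      show a * z * (a * w) = a ^ 2 * (z * w) by ring, mul_right_inj' (pow_ne_zero 2 ha)]
  simp only [IsOnTwistedCubic, Pi.smul_apply, smul_eq_mul, sq, key]

lemma isOnTwistedCubic_rep_mk_iff {v : Fin 4 → F} (hv : v ≠ 0) :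
    IsOnTwistedCubic (mk F v hv).rep ↔ IsOnTwistedCubic v := by
  obtain ⟨a, ha⟩ := exists_smul_eq_mk_rep F v hv
  rw [← ha, Units.smul_def, isOnTwistedCubic_smul_iff a.ne_zero]

def twistedCubicVec : Option F → Fin 4 → F
  | none => ![0, 0, 0, 1]
  | some u => ![1, u, u ^ 2, u ^ 3]

lemma twistedCubicVec_ne_zero : ∀ o : Option F, twistedCubicVec o ≠ 0
  | none => fun h ↦ by simpa [twistedCubicVec] using congrFun h 3
  | some _ => fun h ↦ by simpa [twistedCubicVec] using congrFun h 0

lemma isOnTwistedCubic_twistedCubicVec : ∀ o : Option F, IsOnTwistedCubic (twistedCubicVec o)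
  | none => by simp [IsOnTwistedCubic, twistedCubicVec]
  | some u => by refine ⟨?_, ?_, ?_⟩ <;> simp [twistedCubicVec] <;> ring

def twistedCubicPoint (o : Option F) : ℙ F (Fin 4 → F) :=
  mk F (twistedCubicVec o) (twistedCubicVec_ne_zero o)

lemma twistedCubicPoint_injective : Function.Injective (twistedCubicPoint (F := F)) := by
  intro o o' h
  obtain ⟨a, ha⟩ := (mk_eq_mk_iff' F _ _ _ _).1 h
  have h₀ := congrFun ha 0
  have h₁ := congrFun ha 1
  have h₃ := congrFun ha 3
  cases o <;> cases o' <;> simp [twistedCubicVec] at h₀ h₁ h₃ <;> simp_all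

lemma exists_smul_twistedCubicVec {v : Fin 4 → F} (h : IsOnTwistedCubic v) :
    ∃ o : Option F, ∃ a : F, a • twistedCubicVec o = v := by
  obtain ⟨h₁, h₂, h₃⟩ := h
  by_cases h₀ : v 0 = 0
  · have hv₁ : v 1 = 0 := pow_eq_zero_iff two_ne_zero |>.1 (by rw [← h₁, h₀, zero_mul])
    have hv₂ : v 2 = 0 := pow_eq_zero_iff two_ne_zero |>.1 (by rw [← h₂, hv₁, zero_mul])
    refine ⟨none, v 3, funext fun i ↦ ?_⟩
    fin_cases i <;> simp [twistedCubicVec, h₀, hv₁, hv₂]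
  · refine ⟨some (v 1 / v 0), v 0, funext fun i ↦ ?_⟩
    fin_cases i <;> simp [twistedCubicVec] <;> field_simp
    · linear_combination -h₁
    · linear_combination -(v 0 * h₃) - v 1 * h₁

lemma setOf_isOnTwistedCubic_rep_eq_range :
    {p : ℙ F (Fin 4 → F) | IsOnTwistedCubic p.rep} = Set.range twistedCubicPoint := by
  ext p
  constructor
  · intro hp
    obtain ⟨o, a, ha⟩ := exists_smul_twistedCubicVec hp
    refine ⟨o, ?_⟩
    conv_rhs => rw [← p.mk_rep]
    exact ((mk_eq_mk_iff' F _ _ _ _).2 ⟨a, ha⟩).symm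
  · rintro ⟨o, rfl⟩
    exact (isOnTwistedCubic_rep_mk_iff _).2 (isOnTwistedCubic_twistedCubicVec o)

lemma card_setOf_isOnTwistedCubic [Fintype F] :
    Nat.card {p : ℙ F (Fin 4 → F) | IsOnTwistedCubic p.rep} = Fintype.card F + 1 := by
  rw [setOf_isOnTwistedCubic_rep_eq_range, Nat.card_range_of_injective twistedCubicPoint_injective,
    Nat.card_eq_fintype_card, Fintype.card_option]

end TwistedCubic

section LaurentSum

variable {F : Type*} [Field F]

lemma laurent_exponent_mul_eq (a b c : F) (hb : b ≠ 0) :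
    a * b + b + c * b - (a * b) ^ 2 * b⁻¹ ^ 2 * (c * b) - (a * b) ^ 2 * b⁻¹ ^ 3 * (c * b) ^ 2
      - a * b * b⁻¹ ^ 2 * (c * b) ^ 2 = b * -((a + 1) * (c + 1) * (a * c - 1)) := by
  field_simp
  ring

lemma units_mul_mul_eq_zero_iff (a c : Fˣ) :
    ((a : F) + 1) * (c + 1) * (a * c - 1) = 0 ↔ a = -1 ∨ c = -1 ∨ c = a⁻¹ := by
  simp only [mul_eq_zero, add_eq_zero_iff_eq_neg, sub_eq_zero, or_assoc, Units.ext_iff,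
    Units.val_neg, Units.val_one, Units.val_inv_eq_inv_val]
  rw [mul_comm, mul_eq_one_iff_eq_inv₀ a.ne_zero]

variable [Fintype F] [DecidableEq F]

lemma sum_units_laurent_eq {R : Type*} [AddCommMonoid R] (f : F → R) :
    ∑ t₁ : Fˣ, ∑ t₂ : Fˣ, ∑ t₃ : Fˣ,
        f ((t₁ : F) + (t₂ : F) + (t₃ : F)
          - (t₁ : F) ^ 2 * ((t₂ : F)⁻¹) ^ 2 * (t₃ : F)
          - (t₁ : F) ^ 2 * ((t₂ : F)⁻¹) ^ 3 * (t₃ : F) ^ 2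
          - (t₁ : F) * ((t₂ : F)⁻¹) ^ 2 * (t₃ : F) ^ 2)
      = ∑ a : Fˣ, ∑ c : Fˣ, ∑ b : Fˣ, f (b * -((a + 1) * (c + 1) * (a * c - 1))) := by
  calc _ = ∑ b : Fˣ, ∑ a : Fˣ, ∑ c : Fˣ, f (b * -((a + 1) * (c + 1) * (a * c - 1))) := by
        rw [Finset.sum_comm]
        refine sum_congr rfl fun b _ ↦ ?_
        symm
        refine Fintype.sum_equiv (Equiv.mulRight b) _ _ fun a ↦ ?_
        refine Fintype.sum_equiv (Equiv.mulRight b) _ _ fun c ↦ ?_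
        simp only [Equiv.coe_mulRight, Units.val_mul]
        rw [laurent_exponent_mul_eq _ _ _ b.ne_zero]
    _ = _ := by
        rw [Finset.sum_comm]
        exact sum_congr rfl fun _ _ ↦ Finset.sum_comm

lemma card_filter_units_mul_mul_eq_zero (a : Fˣ) :
    #{c : Fˣ | ((a : F) + 1) * (c + 1) * (a * c - 1) = 0}
      = if a = -1 then Fintype.card Fˣ else 2 := by
  simp only [units_mul_mul_eq_zero_iff]
  split_ifs with ha
  · simp [ha]
  · have hne : (-1 : Fˣ) ≠ a⁻¹ := fun h ↦ ha (by rw [← inv_inj, ← h, inv_neg, inv_one])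
    rw [← card_pair hne]
    congr 1
    ext c
    simp [ha]

lemma sum_card_filter_units_mul_mul_eq_zero :
    ∑ a : Fˣ, #{c : Fˣ | ((a : F) + 1) * (c + 1) * (a * c - 1) = 0}
      = Fintype.card Fˣ + 2 * (Fintype.card Fˣ - 1) := by
  simp only [card_filter_units_mul_mul_eq_zero]
  rw [Fintype.sum_eq_add_sum_compl (-1), if_pos rfl,
    sum_congr rfl fun a ha ↦ if_neg (by simpa using ha), sum_const, card_compl, card_singleton,
    smul_eq_mul, mul_comm]

theorem sum_addChar_laurent_eq {R : Type*} [CommRing R] [IsDomain R] {ψ : AddChar F R}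
    (hψ : ψ ≠ 1) :
    ∑ t₁ : Fˣ, ∑ t₂ : Fˣ, ∑ t₃ : Fˣ,
        ψ ((t₁ : F) + (t₂ : F) + (t₃ : F)
          - (t₁ : F) ^ 2 * ((t₂ : F)⁻¹) ^ 2 * (t₃ : F)
          - (t₁ : F) ^ 2 * ((t₂ : F)⁻¹) ^ 3 * (t₃ : F) ^ 2
          - (t₁ : F) * ((t₂ : F)⁻¹) ^ 2 * (t₃ : F) ^ 2)
      = 2 * (Fintype.card F : R) ^ 2 - 3 * Fintype.card F - 1 := by
  have hunits : (Fintype.card Fˣ : R) = Fintype.card F - 1 := by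
    rw [Fintype.card_units, Nat.cast_pred Fintype.card_pos]
  calc _ = ∑ a : Fˣ, ∑ c : Fˣ,
        ((if ((a : F) + 1) * (c + 1) * (a * c - 1) = 0 then (Fintype.card F : R) else 0) - 1) := by
        simp only [sum_units_laurent_eq, AddChar.sum_units_mul_eq hψ, neg_eq_zero]
    _ = (∑ a : Fˣ, (#{c : Fˣ | ((a : F) + 1) * (c + 1) * (a * c - 1) = 0} : R))
          * Fintype.card F - (Fintype.card Fˣ : R) ^ 2 := by
        simp only [sum_sub_distrib, sum_ite, sum_const_zero, add_zero, sum_const, nsmul_eq_mul,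
          ← sum_mul, card_univ]
        ring
    _ = 2 * (Fintype.card F : R) ^ 2 - 3 * Fintype.card F - 1 := by
        rw [← Nat.cast_sum, sum_card_filter_units_mul_mul_eq_zero, Nat.cast_add, Nat.cast_mul,
          Nat.cast_pred Fintype.card_pos, hunits]
        ring

end LaurentSum

theorem stmt12 (F : Type) [Field F] [Fintype F] [DecidableEq F] (q : ℕ) (hq : q = Fintype.card F)
    (θ : AddChar F ℂ) (hθ : θ ≠ 1) (L : ℂ)
    (hL : L = ∑ t₁ : Fˣ, ∑ t₂ : Fˣ, ∑ t₃ : Fˣ,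
        θ ((t₁ : F) + (t₂ : F) + (t₃ : F)
          - (t₁ : F) ^ 2 * ((t₂ : F)⁻¹) ^ 2 * (t₃ : F)
          - (t₁ : F) ^ 2 * ((t₂ : F)⁻¹) ^ 3 * (t₃ : F) ^ 2
          - (t₁ : F) * ((t₂ : F)⁻¹) ^ 2 * (t₃ : F) ^ 2)) :
    (Nat.card {p : Projectivization F (Fin 4 → F) |
        p.rep 0 * p.rep 2 = (p.rep 1) ^ 2 ∧
        p.rep 1 * p.rep 3 = (p.rep 2) ^ 2 ∧
        p.rep 0 * p.rep 3 = p.rep 1 * p.rep 2} : ℂ)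
      = -2 * (q : ℂ) ^ 2 + 6 * q - 1 + (((q : ℂ) - 1) * L - 1) / q := by
  have hV := card_setOf_isOnTwistedCubic (F := F)
  unfold IsOnTwistedCubic at hV
  have hq₀ : (q : ℂ) ≠ 0 := by rw [hq]; exact_mod_cast Fintype.card_ne_zero
  rw [hV, hL, sum_addChar_laurent_eq hθ, ← hq]
  field_simp
  push_cast
  ring
end

section
/- For any nontrivial additive character θ of F_q, Σ_{t₁,t₂,t₃ ∈ F_q×} θ(t₁ + t₂ + t₃ - t₁²t₂⁻²t₃ - t₁²t₂⁻³t₃² - t₁t₂⁻²t₃²) = 2q² - 3q - 1. -/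
/-!
The substitution `(t₁, t₂, t₃) = (s v² t, v t, t)` is a bijection of `(F×)³` turning the phase
into `(1 - s)(s v + 1)(v + 1) · t`. Summing `θ (c t)` over `t ∈ F×` gives `q · [c = 0] - 1`, so the
sum is `q N - (q - 1)²`, where `N = 3 q - 5` counts the pairs `(s, v) ∈ (F×)²` with `s = 1`,
`v = -1` or `s v = -1`.
-/

open Finset

section GroupWithZero

variable {G₀ M : Type*} [GroupWithZero G₀] [Fintype G₀] [DecidableEq G₀] [AddCommMonoid M]

lemma sum_units_add_apply_zero (g : G₀ → M) : ∑ t : G₀ˣ, g t + g 0 = ∑ x, g x := by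
  rw [Fintype.sum_eq_add_sum_subtype_ne g 0, add_comm, ← unitsEquivNeZero.sum_comp]
  rfl

end GroupWithZero

namespace AddChar

variable {F R : Type*} [Field F] [Fintype F] [DecidableEq F] [CommRing R] [IsDomain R]
  {θ : AddChar F R}

lemma sum_units_mul (hθ : θ ≠ 1) (c : F) :
    ∑ t : Fˣ, θ (c * t) = (if c = 0 then (Fintype.card F : R) else 0) - 1 := by
  have h := sum_units_add_apply_zero (fun x ↦ θ (c * x))
  rw [mul_zero, map_zero_eq_one] at h
  rw [eq_sub_iff_add_eq, h]
  simp_rw [mul_comm c]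
  simpa using sum_mulShift c (IsPrimitive.of_ne_one hθ)

lemma sum_sum_units_mul {ι : Type*} [Fintype ι] (hθ : θ ≠ 1) (f : ι → F) :
    ∑ i, ∑ t : Fˣ, θ (f i * t) = Fintype.card F * #{i | f i = 0} - Fintype.card ι := by
  simp only [sum_units_mul hθ, sum_sub_distrib, sum_ite, sum_const_zero, sum_const, card_univ]
  simp [mul_comm]

end AddChar

def shearEquiv (G : Type*) [CommGroup G] : G × G × G ≃ G × G × G where
  toFun p := (p.1 * p.2.1 ^ 2 * p.2.2, p.2.1 * p.2.2, p.2.2)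
  invFun p := (p.1 * p.2.2 / p.2.1 ^ 2, p.2.1 / p.2.2, p.2.2)
  left_inv _ := by
    ext <;> apply Additive.ofMul.injective <;> simp only [ofMul_mul, ofMul_div, ofMul_pow] <;> abel
  right_inv _ := by
    ext <;> apply Additive.ofMul.injective <;> simp only [ofMul_mul, ofMul_div, ofMul_pow] <;> abel

section Phase

variable {F : Type*} [Field F]

def laurentPhase (t₁ t₂ t₃ : F) : F :=
  t₁ + t₂ + t₃ - t₁ ^ 2 * t₂⁻¹ ^ 2 * t₃ - t₁ ^ 2 * t₂⁻¹ ^ 3 * t₃ ^ 2 - t₁ * t₂⁻¹ ^ 2 * t₃ ^ 2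

def shearedPhase (s v : F) : F := (1 - s) * (s * v + 1) * (v + 1)

lemma laurentPhase_shear (s : F) {v : F} (hv : v ≠ 0) (t : F) :
    laurentPhase (s * v ^ 2 * t) (v * t) t = shearedPhase s v * t := by
  unfold laurentPhase shearedPhase
  field_simp
  ring

lemma sum_laurentPhase_eq {M : Type*} [AddCommMonoid M] [Fintype F] [DecidableEq F] (g : F → M) :
    ∑ t₁ : Fˣ, ∑ t₂ : Fˣ, ∑ t₃ : Fˣ, g (laurentPhase t₁ t₂ t₃)
      = ∑ p : Fˣ × Fˣ, ∑ t : Fˣ, g (shearedPhase (p.1 : F) p.2 * t) := by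
  rw [Fintype.sum_prod_type]
  simp only [← Fintype.sum_prod_type']
  refine (Fintype.sum_equiv (shearEquiv Fˣ) _ _ fun ⟨s, v, t⟩ ↦ ?_).symm
  simp only [shearEquiv, Equiv.coe_fn_mk, Units.val_mul, Units.val_pow_eq_pow_val]
  rw [laurentPhase_shear _ v.ne_zero]

lemma shearedPhase_units_eq_zero_iff (s v : Fˣ) :
    shearedPhase (s : F) v = 0 ↔ s = 1 ∨ v = -s⁻¹ ∨ v = -1 := by
  simp only [shearedPhase, mul_eq_zero, sub_eq_zero, add_eq_zero_iff_eq_neg, Units.ext_iff,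
    Units.val_neg, Units.val_inv_eq_inv_val, Units.val_one]
  rw [eq_comm, or_assoc, ← mul_neg_one (s : F)⁻¹, eq_inv_mul_iff_mul_eq₀ s.ne_zero]

variable [Fintype F] [DecidableEq F]

lemma card_shearedPhase_fiber (s : Fˣ) :
    #{v : Fˣ | shearedPhase (s : F) v = 0} = if s = 1 then Fintype.card F - 1 else 2 := by
  simp only [shearedPhase_units_eq_zero_iff]
  split_ifs with hs
  · simp [hs, Fintype.card_units]
  · have hne : -s⁻¹ ≠ -1 := by simpa using hs
    rw [← card_pair hne]
    congr 1
    ext v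
    simp [hs]

lemma card_shearedPhase_eq_zero_add_five :
    #{p : Fˣ × Fˣ | shearedPhase (p.1 : F) p.2 = 0} + 5 = 3 * Fintype.card F := by
  have hq : 2 ≤ Fintype.card F := Fintype.one_lt_card
  rw [card_filter, Fintype.sum_prod_type]
  simp only [← card_filter, card_shearedPhase_fiber]
  rw [Fintype.sum_eq_add_sum_subtype_ne _ 1, if_pos rfl,
    Fintype.sum_congr _ (fun _ ↦ 2) fun s ↦ if_neg s.2]
  simp only [sum_const, card_univ, Fintype.card_subtype_compl, Fintype.card_unique,
    Fintype.card_units, smul_eq_mul]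
  omega

end Phase

theorem stmt13 (F : Type) [Field F] [Fintype F] [DecidableEq F] (q : ℕ) (hq : q = Fintype.card F)
    (θ : AddChar F ℂ) (hθ : θ ≠ 1) :
    ∑ t₁ : Fˣ, ∑ t₂ : Fˣ, ∑ t₃ : Fˣ,
        θ ((t₁ : F) + (t₂ : F) + (t₃ : F)
          - (t₁ : F) ^ 2 * ((t₂ : F)⁻¹) ^ 2 * (t₃ : F)
          - (t₁ : F) ^ 2 * ((t₂ : F)⁻¹) ^ 3 * (t₃ : F) ^ 2
          - (t₁ : F) * ((t₂ : F)⁻¹) ^ 2 * (t₃ : F) ^ 2)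
      = 2 * (q : ℂ) ^ 2 - 3 * q - 1 := by
  have hcount : (#{p : Fˣ × Fˣ | shearedPhase (p.1 : F) p.2 = 0} : ℂ) = 3 * q - 5 := by
    rw [eq_sub_iff_add_eq, hq]
    exact_mod_cast card_shearedPhase_eq_zero_add_five
  have hunits : (Fintype.card Fˣ : ℂ) = q - 1 := by
    rw [Fintype.card_units, hq, Nat.cast_pred Fintype.card_pos]
  change ∑ t₁ : Fˣ, ∑ t₂ : Fˣ, ∑ t₃ : Fˣ, θ (laurentPhase (t₁ : F) t₂ t₃) = _
  rw [sum_laurentPhase_eq, AddChar.sum_sum_units_mul hθ, hcount, Fintype.card_prod, Nat.cast_mul,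
    hunits, ← hq]
  ring
end

section
/- Let V ⊂ P⁵ over F_q be the image of the Segre embedding P¹ × P² ↪ P⁵, defined by f₁ = x₁x₅ - x₂x₄, f₂ = x₁x₆ - x₃x₄, f₃ = x₂x₆ - x₃x₅. Then the number of F_q-rational points of V with at least one coordinate equal to zero is 5q² - q + 2. -/
/-!
The Segre map `([a], [b]) ↦ [a ⊗ b]` is a bijection from `ℙ¹ × ℙ²` onto the variety cut out by
the `2 × 2` minors, since a nonzero matrix with vanishing `2 × 2` minors is an outer product whose
factors are unique up to scalars. A coordinate `aᵢ bⱼ` of `a ⊗ b` vanishes iff `aᵢ = 0` or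
`bⱼ = 0`, so the points with no zero coordinate are the image of the product of the two tori.
The torus of `ℙⁿ⁻¹` has `(q - 1)ⁿ⁻¹` points, and the count is
`(q + 1)(q² + q + 1) - (q - 1)(q - 1)² = 5q² - q + 2`.
-/

open scoped LinearAlgebra.Projectivization
open Projectivization

namespace Projectivization

variable {k V : Type*} [DivisionRing k] [AddCommGroup V] [Module k V]

lemma card_subtype_rep_mul_card_units (Q : V → Prop) (hQ : ∀ (c : kˣ) (v : V), Q (c • v) ↔ Q v) :
    Nat.card {p : ℙ k V // Q p.rep} * Nat.card kˣ = Nat.card {v : V // v ≠ 0 ∧ Q v} := by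
  have hQ_rep (v : {v : V // v ≠ 0}) : Q v ↔ Q (mk k v.1 v.2).rep := by
    obtain ⟨c, hc⟩ := exists_smul_eq_mk_rep k v.1 v.2
    rw [← hc, hQ]
  rw [← Nat.card_prod]
  exact Nat.card_congr <| Equiv.prodSubtypeFstEquivSubtypeProd.symm.trans <|
    ((nonZeroEquivProjectivizationProdUnits k V).subtypeEquiv hQ_rep).symm.trans <|
      Equiv.subtypeSubtypeEquivSubtypeInter _ Q

lemma card_rep_apply_ne_zero [Finite k] {ι : Type*} [Finite ι] [Nonempty ι] :
    Nat.card {p : ℙ k (ι → k) // ∀ i, p.rep i ≠ 0} = (Nat.card k - 1) ^ (Nat.card ι - 1) := by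
  have hq : 0 < Nat.card k - 1 := Nat.sub_pos_of_lt Finite.one_lt_card
  have hne (v : ι → k) : v ≠ 0 ∧ (∀ i, v i ≠ 0) ↔ ∀ i, v i ≠ 0 :=
    and_iff_right_of_imp fun h h0 => h (Classical.arbitrary ι) (congrFun h0 _)
  apply Nat.eq_of_mul_eq_mul_right hq
  calc _ = Nat.card {p : ℙ k (ι → k) // ∀ i, p.rep i ≠ 0} * Nat.card kˣ := by rw [Nat.card_units]
    _ = Nat.card {v : ι → k // v ≠ 0 ∧ ∀ i, v i ≠ 0} :=
      card_subtype_rep_mul_card_units (fun v : ι → k => ∀ i, v i ≠ 0) fun c v => by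
        simp [Units.smul_def]
    _ = (Nat.card k - 1) ^ Nat.card ι := by
      rw [Nat.card_congr ((Equiv.subtypeEquivRight hne).trans
          (Equiv.subtypePiEquivPi (p := fun _ x => x ≠ 0))),
        Nat.card_fun, ← Nat.card_congr unitsEquivNeZero, Nat.card_units]
    _ = _ := (pow_sub_one_mul Nat.card_pos.ne' _).symm

end Projectivization

lemma card_setOf_or_add_card_mul_card {α β : Type*} [Finite α] [Finite β] (P : α → Prop)
    (Q : β → Prop) :
    Nat.card {x : α × β | P x.1 ∨ Q x.2} + Nat.card {a // ¬P a} * Nat.card {b // ¬Q b}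
      = Nat.card α * Nat.card β := by
  have hcompl : Nat.card ↥{x : α × β | P x.1 ∨ Q x.2}ᶜ = Nat.card ({a // ¬P a} × {b // ¬Q b}) :=
    Nat.card_congr <| (Equiv.subtypeEquivRight fun x => not_or).trans
      (Equiv.subtypeProdEquivProd (p := fun a => ¬P a) (q := fun b => ¬Q b))
  rw [← Nat.card_prod, ← hcompl, ← Nat.card_prod, Nat.card_coe_set_eq,
    Nat.card_coe_set_eq, Set.ncard_add_ncard_compl]

section Segre

variable {F ι κ σ : Type*} [Field F] (e : ι × κ ≃ σ)

def segreVec (a : ι → F) (b : κ → F) : σ → F := fun s => a (e.symm s).1 * b (e.symm s).2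

def MinorsVanish (v : σ → F) : Prop :=
  ∀ i i' j j', v (e (i, j)) * v (e (i', j')) = v (e (i, j')) * v (e (i', j))

variable {e}

@[simp]
lemma segreVec_apply (a : ι → F) (b : κ → F) (i : ι) (j : κ) :
    segreVec e a b (e (i, j)) = a i * b j := by
  simp [segreVec]

lemma segreVec_smul_smul (c d : F) (a : ι → F) (b : κ → F) :
    segreVec e (c • a) (d • b) = (c * d) • segreVec e a b := by
  ext s
  simp only [segreVec, Pi.smul_apply, smul_eq_mul]
  ring

lemma segreVec_ne_zero {a : ι → F} {b : κ → F} (ha : a ≠ 0) (hb : b ≠ 0) :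
    segreVec e a b ≠ 0 := by
  obtain ⟨i, hi⟩ := Function.ne_iff.mp ha
  obtain ⟨j, hj⟩ := Function.ne_iff.mp hb
  exact Function.ne_iff.mpr ⟨e (i, j), by simpa using mul_ne_zero hi hj⟩

lemma exists_segreVec_eq_zero_iff [Nonempty ι] [Nonempty κ] {a : ι → F} {b : κ → F} :
    (∃ s, segreVec e a b s = 0) ↔ (∃ i, a i = 0) ∨ ∃ j, b j = 0 := by
  simp [e.surjective.exists, exists_or]

lemma minorsVanish_segreVec (a : ι → F) (b : κ → F) : MinorsVanish e (segreVec e a b) := by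
  intro i i' j j'
  simp only [segreVec_apply]
  ring

lemma MinorsVanish.smul {v : σ → F} (h : MinorsVanish e v) (c : F) : MinorsVanish e (c • v) := by
  intro i i' j j'
  simp only [Pi.smul_apply, smul_eq_mul]
  linear_combination c ^ 2 * h i i' j j'

/-- The factors are a column and a row through a nonzero entry `v (i₀, j₀)`, the row divided
by that entry. -/
lemma MinorsVanish.exists_segreVec_eq {v : σ → F} (h : MinorsVanish e v) (hv : v ≠ 0) :
    ∃ a b, a ≠ 0 ∧ b ≠ 0 ∧ segreVec e a b = v := by
  obtain ⟨s, hs⟩ : ∃ s, v s ≠ 0 := Function.ne_iff.mp hv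
  obtain ⟨⟨i₀, j₀⟩, rfl⟩ := e.surjective s
  refine ⟨fun i => v (e (i, j₀)), fun j => v (e (i₀, j)) / v (e (i₀, j₀)),
    Function.ne_iff.mpr ⟨i₀, hs⟩, Function.ne_iff.mpr ⟨j₀, by simp [hs]⟩, funext fun s => ?_⟩
  obtain ⟨⟨i, j⟩, rfl⟩ := e.surjective s
  simp only [segreVec_apply]
  field_simp
  linear_combination -h i i₀ j j₀

lemma exists_smul_eq_left_of_segreVec_eq {a a' : ι → F} {b b' : κ → F} (hb : b ≠ 0)
    (h : segreVec e a b = segreVec e a' b') : ∃ t : F, t • a' = a := by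
  obtain ⟨j, hj⟩ : ∃ j, b j ≠ 0 := Function.ne_iff.mp hb
  refine ⟨b' j / b j, funext fun i => ?_⟩
  have hij := congrFun h (e (i, j))
  simp only [segreVec_apply] at hij
  simp only [Pi.smul_apply, smul_eq_mul]
  field_simp
  linear_combination -hij

lemma exists_smul_eq_right_of_segreVec_eq {a a' : ι → F} {b b' : κ → F} (ha : a ≠ 0)
    (h : segreVec e a b = segreVec e a' b') : ∃ t : F, t • b' = b := by
  obtain ⟨i, hi⟩ : ∃ i, a i ≠ 0 := Function.ne_iff.mp ha
  refine ⟨a' i / a i, funext fun j => ?_⟩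
  have hij := congrFun h (e (i, j))
  simp only [segreVec_apply] at hij
  simp only [Pi.smul_apply, smul_eq_mul]
  field_simp
  linear_combination -hij

variable (e) in
noncomputable def segre (x : ℙ F (ι → F) × ℙ F (κ → F)) : ℙ F (σ → F) :=
  mk F (segreVec e x.1.rep x.2.rep) (segreVec_ne_zero x.1.rep_nonzero x.2.rep_nonzero)

lemma segre_mk {a : ι → F} {b : κ → F} (ha : a ≠ 0) (hb : b ≠ 0) :
    segre e (mk F a ha, mk F b hb) = mk F (segreVec e a b) (segreVec_ne_zero ha hb) := by
  obtain ⟨c, hc⟩ := exists_smul_eq_mk_rep F a ha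
  obtain ⟨d, hd⟩ := exists_smul_eq_mk_rep F b hb
  rw [segre, mk_eq_mk_iff']
  exact ⟨c * d, by simp [← hc, ← hd, Units.smul_def, segreVec_smul_smul]⟩

lemma segre_injective : Function.Injective (segre e (F := F)) := by
  rintro ⟨A, B⟩ ⟨A', B'⟩ h
  induction A using ind with | h a ha => ?_
  induction B using ind with | h b hb => ?_
  induction A' using ind with | h a' ha' => ?_
  induction B' using ind with | h b' hb' => ?_
  rw [segre_mk, segre_mk, mk_eq_mk_iff'] at h
  obtain ⟨u, hu⟩ := h
  rw [← one_mul u, ← segreVec_smul_smul, one_smul] at hu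
  obtain ⟨s, hs⟩ := exists_smul_eq_left_of_segreVec_eq hb hu.symm
  obtain ⟨t, ht⟩ := exists_smul_eq_right_of_segreVec_eq ha hu.symm
  rw [Prod.mk.injEq, mk_eq_mk_iff', mk_eq_mk_iff']
  exact ⟨⟨s, hs⟩, ⟨t * u, by rw [← ht, mul_smul]⟩⟩

lemma range_segre : Set.range (segre e (F := F)) = {p | MinorsVanish e p.rep} := by
  ext p
  constructor
  · rintro ⟨x, rfl⟩
    obtain ⟨c, hc⟩ := exists_smul_eq_mk_rep F _ (segreVec_ne_zero x.1.rep_nonzero x.2.rep_nonzero)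
    rw [Set.mem_ofPred_eq, segre, ← hc, Units.smul_def]
    exact (minorsVanish_segreVec _ _).smul _
  · intro hp
    obtain ⟨a, b, ha, hb, hab⟩ := MinorsVanish.exists_segreVec_eq hp p.rep_nonzero
    refine ⟨(mk F a ha, mk F b hb), ?_⟩
    rw [segre_mk]
    conv_rhs => rw [← mk_rep p]
    simp only [hab]

lemma exists_rep_segre_eq_zero_iff [Nonempty ι] [Nonempty κ] (x : ℙ F (ι → F) × ℙ F (κ → F)) :
    (∃ s, (segre e x).rep s = 0) ↔ (∃ i, x.1.rep i = 0) ∨ ∃ j, x.2.rep j = 0 := by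
  obtain ⟨c, hc⟩ := exists_smul_eq_mk_rep F _ (segreVec_ne_zero x.1.rep_nonzero x.2.rep_nonzero)
  rw [segre, ← hc, ← exists_segreVec_eq_zero_iff (e := e)]
  simp [Units.smul_def]

lemma segre_image_setOf_exists_rep_eq_zero [Nonempty ι] [Nonempty κ] :
    segre e '' {x | (∃ i, x.1.rep i = 0) ∨ ∃ j, x.2.rep j = 0}
      = {p : ℙ F (σ → F) | MinorsVanish e p.rep ∧ ∃ s, p.rep s = 0} := by
  have hpre : {x : ℙ F (ι → F) × ℙ F (κ → F) | (∃ i, x.1.rep i = 0) ∨ ∃ j, x.2.rep j = 0}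
      = segre e ⁻¹' {p | ∃ s, p.rep s = 0} := by
    ext x
    exact (exists_rep_segre_eq_zero_iff x).symm
  rw [hpre, Set.image_preimage_eq_range_inter, range_segre]
  rfl

end Segre

/-- `finProdFinEquiv` sends `(i, j)` to `3 * i + j`, the coordinate order of the Segre
embedding `ℙ¹ × ℙ² → ℙ⁵`. -/
lemma minorsVanish_finProdFinEquiv_iff {F : Type*} [Field F] (v : Fin 6 → F) :
    MinorsVanish (finProdFinEquiv (m := 2) (n := 3)) v ↔
      v 0 * v 4 = v 1 * v 3 ∧ v 0 * v 5 = v 2 * v 3 ∧ v 1 * v 5 = v 2 * v 4 := by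
  refine ⟨fun h => ⟨h 0 1 0 1, h 0 1 0 2, h 0 1 1 2⟩, fun ⟨h₁, h₂, h₃⟩ i i' j j' => ?_⟩
  fin_cases i <;> fin_cases i' <;> fin_cases j <;> fin_cases j' <;> simp [finProdFinEquiv] <;> grind

theorem stmt14 (F : Type) [Field F] [Fintype F] (q : ℕ) (hq : q = Fintype.card F) :
    Nat.card {p : Projectivization F (Fin 6 → F) |
        (p.rep 0 * p.rep 4 = p.rep 1 * p.rep 3 ∧
         p.rep 0 * p.rep 5 = p.rep 2 * p.rep 3 ∧
         p.rep 1 * p.rep 5 = p.rep 2 * p.rep 4) ∧ ∃ i, p.rep i = 0}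
      = 5 * q ^ 2 - q + 2 := by
  have hq2 : 2 ≤ q := hq ▸ Fintype.one_lt_card
  simp only [← minorsVanish_finProdFinEquiv_iff, ← segre_image_setOf_exists_rep_eq_zero,
    Nat.card_image_of_injective segre_injective]
  have hcount := card_setOf_or_add_card_mul_card (fun A : ℙ F (Fin 2 → F) => ∃ i, A.rep i = 0)
    (fun B : ℙ F (Fin 3 → F) => ∃ j, B.rep j = 0)
  simp only [not_exists, card_rep_apply_ne_zero,
    card_of_finrank_two F _ (Module.finrank_fin_fun F),
    card_of_finrank F (Fin 3 → F) (Module.finrank_fin_fun F), Nat.card_eq_fintype_card,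
    Fintype.card_fin, Finset.sum_range_succ, Finset.sum_range_zero, Nat.reduceSub, pow_zero, pow_one, zero_add,
    ← hq] at hcount
  have hpoly : 5 * q ^ 2 - q + 2 + (q - 1) * (q - 1) ^ 2 = (q + 1) * (1 + q + q ^ 2) := by
    zify [show 1 ≤ q by omega, show q ≤ 5 * q ^ 2 by nlinarith]
    ring
  linarith
end
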